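/- Let a = −1 and let f : ℝ → ℝ satisfy f(t) ≠ 0 for all t ∈ ℝ. Then the zero set of the vortex-plug field V_{−1,f} in ℝ³ is exactly the two points {(0,0,1), (0,0,−1)}. -/
import Mathlib


/-- `H_a(x,y,z) = (x² + y²)(x² + y² + z² + a)`. -/
noncomputable def Ha3 (a : ℝ) : ℝ × ℝ × ℝ → ℝ :=
  fun p => (p.1 ^ 2 + p.2.1 ^ 2) * (p.1 ^ 2 + p.2.1 ^ 2 + p.2.2 ^ 2 + a)

/-- The vortex-plug vector field
`V_{a,f}(x,y,z) = (−2xz − f(H_a)·y, −2yz + f(H_a)·x, 2(2(x²+y²)+z²+a))`. -/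
noncomputable def Vaf (a : ℝ) (f : ℝ → ℝ) : ℝ × ℝ × ℝ → ℝ × ℝ × ℝ :=
  fun p =>
    (-2 * p.1 * p.2.2 - f (Ha3 a p) * p.2.1,
      -2 * p.2.1 * p.2.2 + f (Ha3 a p) * p.1,
      2 * (2 * (p.1 ^ 2 + p.2.1 ^ 2) + p.2.2 ^ 2 + a))

/-- For `a = −1` and `f` nowhere vanishing, the zero set of `V_{−1,f}` is exactly the two
points `(0,0,1)` and `(0,0,−1)`. -/
theorem stmt10 (f : ℝ → ℝ) (hf : ∀ t, f t ≠ 0) :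
    {p : ℝ × ℝ × ℝ | Vaf (-1) f p = 0} =
      {((0 : ℝ), (0 : ℝ), (1 : ℝ)), ((0 : ℝ), (0 : ℝ), (-1 : ℝ))} := by
  ext ⟨x, y, z⟩
  simp only [Set.mem_setOf_eq, Set.mem_insert_iff, Set.mem_singleton_iff, Vaf, Prod.mk.injEq,
    Prod.ext_iff]
  constructor
  · rintro ⟨h1, h2, h3⟩
    simp only [Prod.fst_zero, Prod.snd_zero] at h1 h2 h3
    have key : f (Ha3 (-1) (x, y, z)) * (x ^ 2 + y ^ 2) = 0 := by linear_combination x * h2 - y * h1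
    have hxy : x ^ 2 + y ^ 2 = 0 := by
      rcases mul_eq_zero.mp key with h | h
      · exact absurd h (hf _)
      · exact h
    have hx : x = 0 := by nlinarith [sq_nonneg x, sq_nonneg y]
    have hy : y = 0 := by nlinarith [sq_nonneg x, sq_nonneg y]
    have hz : z ^ 2 = 1 := by nlinarith
    have : (z - 1) * (z + 1) = 0 := by nlinarith
    rcases mul_eq_zero.mp this with h | h
    · exact Or.inl ⟨hx, hy, by linarith⟩
    · exact Or.inr ⟨hx, hy, by linarith⟩
  · rintro (⟨hx, hy, hz⟩ | ⟨hx, hy, hz⟩) <;> subst hx <;> subst hy <;> subst hz <;>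
      simp [Ha3, Prod.ext_iff]
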